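/- Let τ_i and σ_i be π-compatible topologies on a set X_i for each i ≤ n (a finite family). Then the finite product ∏_{i=1}^n (X_i, τ_i) is a Baire space if and only if ∏_{i=1}^n (X_i, σ_i) is a Baire space. -/

import Mathlib

open Topology Set

/-! π-compatible topologies have the same dense sets, and a `σ`-open `σ`-dense set has a
`τ`-dense `τ`-interior. So, if `τ` is Baire, the `τ`-interiors of countably many `σ`-open
dense sets have a `τ`-dense, hence `σ`-dense, intersection, and `σ` is Baire. For
products, a nonempty basic open box of one product topology contains a nonempty box of
the other, built factorwise, so the product topologies are again π-compatible. -/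

/-- Topologies `τ` and `σ` on `X` are π-compatible if each is a π-network for the
other: every nonempty open set of either topology contains a nonempty open set of
the other topology. -/
def PiCompatible {X : Type*} (τ σ : TopologicalSpace X) : Prop :=
  (∀ O : Set X, IsOpen[σ] O → O.Nonempty → ∃ V : Set X, IsOpen[τ] V ∧ V.Nonempty ∧ V ⊆ O) ∧
  (∀ O : Set X, IsOpen[τ] O → O.Nonempty → ∃ V : Set X, IsOpen[σ] V ∧ V.Nonempty ∧ V ⊆ O)

def IsPiNetworkFor {X : Type*} (τ σ : TopologicalSpace X) : Prop :=
  ∀ O : Set X, IsOpen[σ] O → O.Nonempty → ∃ V : Set X, IsOpen[τ] V ∧ V.Nonempty ∧ V ⊆ O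

namespace IsPiNetworkFor

variable {X : Type*} {τ σ : TopologicalSpace X}

theorem dense (h : IsPiNetworkFor τ σ) {S : Set X} (hS : @Dense X τ S) : @Dense X σ S := by
  rw [@dense_iff_inter_open X σ]
  intro U hU hUne
  obtain ⟨V, hVopen, hVne, hVU⟩ := h U hU hUne
  obtain ⟨x, hxV, hxS⟩ := (@dense_iff_inter_open X τ S).1 hS V hVopen hVne
  exact ⟨x, hVU hxV, hxS⟩

theorem pi {ι : Type*} {Y : ι → Type*} {τ σ : ∀ i, TopologicalSpace (Y i)}
    (h : ∀ i, IsPiNetworkFor (τ i) (σ i)) :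
    IsPiNetworkFor (@Pi.topologicalSpace ι Y τ) (@Pi.topologicalSpace ι Y σ) := by
  rintro O hO ⟨f, hf⟩
  obtain ⟨I, u, hu, hIu⟩ := (@isOpen_pi_iff ι Y σ O).1 hO f hf
  choose! W hWopen hWne hWu using fun i (hi : i ∈ I) =>
    h i (u i) (hu i hi).1 ⟨f i, (hu i hi).2⟩
  refine ⟨(I : Set ι).pi W, @isOpen_set_pi ι Y τ _ W I.finite_toSet hWopen, ?_,
    (pi_mono hWu).trans hIu⟩
  refine pi_nonempty_iff.2 fun i => ?_
  by_cases hi : i ∈ I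
  · obtain ⟨x, hx⟩ := hWne i hi
    exact ⟨x, fun _ => hx⟩
  · exact ⟨f i, fun hi' => absurd hi' hi⟩

end IsPiNetworkFor

namespace PiCompatible

variable {X : Type*} {τ σ : TopologicalSpace X}

theorem symm (h : PiCompatible τ σ) : PiCompatible σ τ :=
  ⟨h.2, h.1⟩

theorem pi {ι : Type*} {Y : ι → Type*} {τ σ : ∀ i, TopologicalSpace (Y i)}
    (h : ∀ i, PiCompatible (τ i) (σ i)) :
    PiCompatible (@Pi.topologicalSpace ι Y τ) (@Pi.topologicalSpace ι Y σ) :=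
  ⟨IsPiNetworkFor.pi fun i => (h i).1, IsPiNetworkFor.pi fun i => (h i).2⟩

theorem dense_interior (h : PiCompatible τ σ) {D : Set X} (hDopen : IsOpen[σ] D)
    (hD : @Dense X σ D) : @Dense X τ (@interior X τ D) := by
  rw [@dense_iff_inter_open X τ]
  intro U hU hUne
  obtain ⟨V, hVopen, hVne, hVU⟩ := h.2 U hU hUne
  have hVD : (V ∩ D).Nonempty := (@dense_iff_inter_open X σ D).1 hD V hVopen hVne
  obtain ⟨W, hWopen, ⟨x, hxW⟩, hWVD⟩ := h.1 (V ∩ D) (@IsOpen.inter X σ V D hVopen hDopen) hVD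
  exact ⟨x, hVU (hWVD hxW).1,
    @interior_maximal X τ _ _ (fun y hy => (hWVD hy).2) hWopen x hxW⟩

theorem baireSpace (h : PiCompatible τ σ) (hτ : @BaireSpace X τ) : @BaireSpace X σ := by
  refine ⟨fun D hDopen hD => ?_⟩
  have hint : @Dense X τ (⋂ k, @interior X τ (D k)) :=
    hτ.1 _ (fun k => @isOpen_interior X τ (D k)) fun k => h.dense_interior (hDopen k) (hD k)
  exact IsPiNetworkFor.dense h.1
    (@Dense.mono X τ _ _ (iInter_mono fun k => @interior_subset X τ (D k)) hint)

theorem baireSpace_iff (h : PiCompatible τ σ) : @BaireSpace X τ ↔ @BaireSpace X σ :=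
  ⟨h.baireSpace, h.symm.baireSpace⟩

end PiCompatible

/-- For a finite family of pairs of π-compatible topologies, the product with the
`τ`-topologies is a Baire space iff the product with the `σ`-topologies is. -/
theorem stmt_13 {n : ℕ} {X : Fin n → Type*} (τ σ : ∀ i, TopologicalSpace (X i))
    (h : ∀ i, PiCompatible (τ i) (σ i)) :
    @BaireSpace (∀ i, X i) (@Pi.topologicalSpace (Fin n) X τ) ↔
      @BaireSpace (∀ i, X i) (@Pi.topologicalSpace (Fin n) X σ) :=
  (PiCompatible.pi h).baireSpace_iff
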